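/- arXiv:1407.2395 — 6 statements merged into one kernel-verified Lean document; each statement's English description precedes it below -/
import Mathlib

section
/- The constrained least-squares problem reduces to a weighted least-squares problem: min_{P ∈ 𝒫^{r*}} Σ_{k=1}^{n−m} (f(x''_k) − P(x''_k))² = min_{Q ∈ 𝒫^{r−m−1}} Σ_{k=1}^{n−m} w_k (f̂(x''_k) − Q(x''_k))², and if Q̂ attains the right-hand minimum then P̂ = P_{X'} + Q̂·ω_m attains the left-hand minimum. -/
/-!
Every polynomial of degree `≤ r` interpolating `f` at the nodes `x'` is `P_{X'} + Q ω_m`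
with `deg Q ≤ r - m - 1`, since `ω_m` divides any polynomial vanishing at the nodes.
Along this parametrization the residual at an off-node `x''_k` factors as
`f(x''_k) - P(x''_k) = ω_m(x''_k) (f̂(x''_k) - Q(x''_k))`, so the two objective functions coincide.
-/

open Polynomial Finset

namespace Lagrange

variable {F ι : Type*} [Field F] {s : Finset ι} {v : ι → F}

theorem nodal_dvd_of_eval_eq_zero (hvs : Set.InjOn v s) {p : F[X]}
    (hp : ∀ i ∈ s, p.eval (v i) = 0) : nodal s v ∣ p :=
  Finset.prod_dvd_of_coprime
    (fun _ hi _ hj hij ↦ isCoprime_X_sub_C_of_isUnit_sub (sub_ne_zero.2 (hvs.ne hi hj hij)).isUnit)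
    fun i hi ↦ dvd_iff_isRoot.2 (hp i hi)

theorem degree_add_mul_nodal_le {p g : F[X]} {d : ℕ} (hp : p.degree ≤ d) (hs : #s ≤ d)
    (hg : g.degree ≤ (d - #s : ℕ)) : (p + g * nodal s v).degree ≤ d := by
  refine (degree_add_le _ _).trans (max_le hp ?_)
  calc (g * nodal s v).degree ≤ g.degree + #s := by
        simpa only [degree_nodal] using degree_mul_le g (nodal s v)
    _ ≤ (d - #s : ℕ) + (#s : ℕ) := add_le_add_left hg _
    _ = d := by norm_cast; omega

theorem exists_eq_add_mul_nodal_of_eval_eq (hvs : Set.InjOn v s) {p q : F[X]} {d : ℕ}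
    (hp : p.degree ≤ d) (hq : q.degree ≤ d) (heq : ∀ i ∈ s, p.eval (v i) = q.eval (v i)) :
    ∃ g : F[X], g.degree ≤ (d - #s : ℕ) ∧ p = q + g * nodal s v := by
  obtain ⟨g, hg⟩ := nodal_dvd_of_eval_eq_zero hvs (p := p - q) fun i hi ↦ by
    rw [eval_sub, heq i hi, sub_self]
  refine ⟨g, ?_, by linear_combination hg⟩
  rcases eq_or_ne g 0 with rfl | hg0
  · simp
  have hdeg : (nodal s v * g).natDegree ≤ d :=
    natDegree_le_iff_degree_le.2 (hg ▸ (degree_sub_le p q).trans (max_le hp hq))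
  rw [natDegree_mul nodal_ne_zero hg0, natDegree_nodal] at hdeg
  exact natDegree_le_iff_degree_le.1 (by omega)

theorem degree_le_and_eval_eq_iff_exists_eq_add_mul_nodal (hvs : Set.InjOn v s) {p q : F[X]}
    {d : ℕ} (hq : q.degree ≤ d) (hs : #s ≤ d) :
    (p.degree ≤ d ∧ ∀ i ∈ s, p.eval (v i) = q.eval (v i)) ↔
      ∃ g : F[X], g.degree ≤ (d - #s : ℕ) ∧ p = q + g * nodal s v := by
  constructor
  · rintro ⟨hp, heq⟩
    exact exists_eq_add_mul_nodal_of_eval_eq hvs hp hq heq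
  · rintro ⟨g, hg, rfl⟩
    refine ⟨degree_add_mul_nodal_le hq hs hg, fun i hi ↦ ?_⟩
    rw [eval_add, eval_mul, eval_nodal_at_node hi, mul_zero, add_zero]

end Lagrange

theorem constrained_ls_reduces_to_weighted_ls_general
    (m n r : ℕ) (hmr : m < r)
    (x' : Fin (m + 1) → ℝ) (x'' : Fin (n - m) → ℝ)
    (hx'mono : StrictMono x')
    (hdisj : ∀ i k, x' i ≠ x'' k)
    (f : ℝ → ℝ)
    (PX' : Polynomial ℝ) (hPX'deg : PX'.degree ≤ (m : ℕ))
    (hPX'interp : ∀ i, PX'.eval (x' i) = f (x' i))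
    (ω : Polynomial ℝ)
    (hω : ω = ∏ i : Fin (m + 1), (Polynomial.X - Polynomial.C (x' i)))
    (w : Fin (n - m) → ℝ) (hw : ∀ k, w k = (ω.eval (x'' k)) ^ 2)
    (fhat : Fin (n - m) → ℝ)
    (hfhat : ∀ k, fhat k = (f (x'' k) - PX'.eval (x'' k)) / ω.eval (x'' k)) :
    (sInf {e : ℝ | ∃ P : Polynomial ℝ, P.degree ≤ (r : ℕ) ∧
          (∀ i, P.eval (x' i) = f (x' i)) ∧
          e = ∑ k : Fin (n - m), (f (x'' k) - P.eval (x'' k)) ^ 2} =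
        sInf {e : ℝ | ∃ Q : Polynomial ℝ, Q.degree ≤ (r - m - 1 : ℕ) ∧
          e = ∑ k : Fin (n - m), w k * (fhat k - Q.eval (x'' k)) ^ 2}) ∧
      ∀ Qhat : Polynomial ℝ, Qhat.degree ≤ (r - m - 1 : ℕ) →
        (∀ Q : Polynomial ℝ, Q.degree ≤ (r - m - 1 : ℕ) →
          ∑ k : Fin (n - m), w k * (fhat k - Qhat.eval (x'' k)) ^ 2 ≤
            ∑ k : Fin (n - m), w k * (fhat k - Q.eval (x'' k)) ^ 2) →
        ((PX' + Qhat * ω).degree ≤ (r : ℕ) ∧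
          (∀ i, (PX' + Qhat * ω).eval (x' i) = f (x' i)) ∧
          ∀ P : Polynomial ℝ, P.degree ≤ (r : ℕ) → (∀ i, P.eval (x' i) = f (x' i)) →
            ∑ k : Fin (n - m), (f (x'' k) - (PX' + Qhat * ω).eval (x'' k)) ^ 2 ≤
              ∑ k : Fin (n - m), (f (x'' k) - P.eval (x'' k)) ^ 2) := by
  have hω' : ω = Lagrange.nodal univ x' := hω
  have hconstr (P : ℝ[X]) : (P.degree ≤ r ∧ ∀ i, P.eval (x' i) = f (x' i)) ↔
      ∃ Q : ℝ[X], Q.degree ≤ (r - m - 1 : ℕ) ∧ P = PX' + Q * ω := by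
    have h := Lagrange.degree_le_and_eval_eq_iff_exists_eq_add_mul_nodal (s := univ) (p := P)
      hx'mono.injective.injOn (hPX'deg.trans (by exact_mod_cast hmr.le))
      (by simpa using hmr)
    simpa [hPX'interp, ← hω', Nat.sub_sub] using h
  have hres (Q : ℝ[X]) : ∑ k, (f (x'' k) - (PX' + Q * ω).eval (x'' k)) ^ 2 =
      ∑ k, w k * (fhat k - Q.eval (x'' k)) ^ 2 := by
    refine sum_congr rfl fun k _ ↦ ?_
    have hωk : ω.eval (x'' k) ≠ 0 :=
      hω' ▸ Lagrange.eval_nodal_not_at_node fun i _ ↦ (hdisj i k).symm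
    rw [hw, hfhat, eval_add, eval_mul]
    field_simp
    ring
  refine ⟨?_, fun Qhat hQhat hmin ↦ ?_⟩
  · congr 1
    ext e
    constructor
    · rintro ⟨P, hPdeg, hPinterp, rfl⟩
      obtain ⟨Q, hQ, rfl⟩ := (hconstr P).1 ⟨hPdeg, hPinterp⟩
      exact ⟨Q, hQ, hres Q⟩
    · rintro ⟨Q, hQ, rfl⟩
      obtain ⟨hdeg, hinterp⟩ := (hconstr (PX' + Q * ω)).2 ⟨Q, hQ, rfl⟩
      exact ⟨_, hdeg, hinterp, (hres Q).symm⟩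
  · obtain ⟨hdeg, hinterp⟩ := (hconstr _).2 ⟨Qhat, hQhat, rfl⟩
    refine ⟨hdeg, hinterp, fun P hPdeg hPinterp ↦ ?_⟩
    obtain ⟨Q, hQ, rfl⟩ := (hconstr P).1 ⟨hPdeg, hPinterp⟩
    rw [hres, hres]
    exact hmin Q hQ

/-- The constrained least-squares problem reduces to a weighted
least-squares problem:
`min_{P ∈ 𝒫^{r*}} Σ (f(x''_k) − P(x''_k))² = min_{Q ∈ 𝒫^{r−m−1}} Σ w_k (f̂(x''_k) − Q(x''_k))²`,
and if `Q̂` attains the right-hand minimum then `P̂ = P_{X'} + Q̂ ω_m` attains the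
left-hand minimum. -/
theorem constrained_ls_reduces_to_weighted_ls
    (m n r : ℕ) (hmr : m < r) (hrn : r ≤ n)
    (x' : Fin (m + 1) → ℝ) (x'' : Fin (n - m) → ℝ)
    (hx'mono : StrictMono x') (hx''mono : StrictMono x'')
    (hx'mem : ∀ i, x' i ∈ Set.Icc (-1 : ℝ) 1)
    (hx''mem : ∀ k, x'' k ∈ Set.Icc (-1 : ℝ) 1)
    (hdisj : ∀ i k, x' i ≠ x'' k)
    (f : ℝ → ℝ)
    (PX' : Polynomial ℝ) (hPX'deg : PX'.degree ≤ (m : ℕ))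
    (hPX'interp : ∀ i, PX'.eval (x' i) = f (x' i))
    (ω : Polynomial ℝ)
    (hω : ω = ∏ i : Fin (m + 1), (Polynomial.X - Polynomial.C (x' i)))
    (w : Fin (n - m) → ℝ) (hw : ∀ k, w k = (ω.eval (x'' k)) ^ 2)
    (fhat : Fin (n - m) → ℝ)
    (hfhat : ∀ k, fhat k = (f (x'' k) - PX'.eval (x'' k)) / ω.eval (x'' k)) :
    (sInf {e : ℝ | ∃ P : Polynomial ℝ, P.degree ≤ (r : ℕ) ∧
          (∀ i, P.eval (x' i) = f (x' i)) ∧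
          e = ∑ k : Fin (n - m), (f (x'' k) - P.eval (x'' k)) ^ 2} =
        sInf {e : ℝ | ∃ Q : Polynomial ℝ, Q.degree ≤ (r - m - 1 : ℕ) ∧
          e = ∑ k : Fin (n - m), w k * (fhat k - Q.eval (x'' k)) ^ 2}) ∧
      ∀ Qhat : Polynomial ℝ, Qhat.degree ≤ (r - m - 1 : ℕ) →
        (∀ Q : Polynomial ℝ, Q.degree ≤ (r - m - 1 : ℕ) →
          ∑ k : Fin (n - m), w k * (fhat k - Qhat.eval (x'' k)) ^ 2 ≤
            ∑ k : Fin (n - m), w k * (fhat k - Q.eval (x'' k)) ^ 2) →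
        ((PX' + Qhat * ω).degree ≤ (r : ℕ) ∧
          (∀ i, (PX' + Qhat * ω).eval (x' i) = f (x' i)) ∧
          ∀ P : Polynomial ℝ, P.degree ≤ (r : ℕ) → (∀ i, P.eval (x' i) = f (x' i)) →
            ∑ k : Fin (n - m), (f (x'' k) - (PX' + Qhat * ω).eval (x'' k)) ^ 2 ≤
              ∑ k : Fin (n - m), (f (x'' k) - P.eval (x'' k)) ^ 2) :=
  constrained_ls_reduces_to_weighted_ls_general m n r hmr x' x'' hx'mono hdisj f PX' hPX'deg
    hPX'interp ω hω w hw fhat hfhat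
end

section
/- Let {π_i}_{i=0}^{r−m−1} be a basis of 𝒫^{r−m−1} that is orthogonal with respect to the discrete inner product (u,v)_{ω_m²} = Σ_{k=1}^{n−m} w_k u(x''_k) v(x''_k), and let P̂_X be the unique solution of min_{P ∈ 𝒫^{r*}} ‖f − P‖₂². Then ‖f − P̂_X‖₂² = ‖f − P_{X'}‖₂² − Σ_{i=0}^{r−m−1} q̃_i² ‖π_i ω_m‖₂², where q̃_i = (Σ_k (f(x''_k) − P_{X'}(x''_k)) π_i(x''_k) ω_m(x''_k)) / ‖π_i ω_m‖₂² and ‖·‖₂ is the discrete 2-norm on the nodes x''_k. -/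
open Finset

lemma sum_sq_key {K I : ℕ} (g : Fin K → ℝ) (b : Fin I → Fin K → ℝ)
    (horth : ∀ i j, i ≠ j → ∑ k, b i k * b j k = 0)
    (q : Fin I → ℝ)
    (hq : ∀ i, q i = (∑ k, g k * b i k) / (∑ k, (b i k)^2))
    (c : Fin I → ℝ) :
    ∑ k, (g k - ∑ i, c i * b i k)^2
      = ∑ k, (g k)^2 - ∑ i, (q i)^2 * (∑ k, (b i k)^2)
        + ∑ i, (c i - q i)^2 * (∑ k, (b i k)^2) := by
  set A : Fin I → ℝ := fun i => ∑ k, g k * b i k with hA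
  set N : Fin I → ℝ := fun i => ∑ k, (b i k)^2 with hN
  have hqN : ∀ i, q i * N i = A i := by
    intro i
    by_cases h : N i = 0
    · have hb : ∀ k, b i k = 0 := by
        intro k
        have h0 := (Finset.sum_eq_zero_iff_of_nonneg
          (fun k _ => sq_nonneg (b i k))).mp h k (mem_univ k)
        exact pow_eq_zero_iff (by norm_num) |>.mp h0
      have hA0 : A i = 0 := by simp [hA, hb]
      simp [h, hA0]
    · rw [hq i, div_mul_cancel₀]; exact h
  have e2 : ∑ k, (∑ i, c i * b i k) * (∑ j, c j * b j k) = ∑ i, (c i)^2 * N i := by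
    have : ∀ k, (∑ i, c i * b i k) * (∑ j, c j * b j k)
        = ∑ i, ∑ j, (c i * b i k) * (c j * b j k) := fun k => Finset.sum_mul_sum _ _ _ _
    rw [Finset.sum_congr rfl (fun k _ => this k), Finset.sum_comm]
    refine Finset.sum_congr rfl (fun i _ => ?_)
    rw [Finset.sum_comm]
    have : ∀ j, ∑ k, (c i * b i k) * (c j * b j k) = c i * c j * ∑ k, b i k * b j k := by
      intro j; rw [Finset.mul_sum]; exact Finset.sum_congr rfl (fun k _ => by ring)
    rw [Finset.sum_congr rfl (fun j _ => this j)]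
    rw [Finset.sum_eq_single i (fun j _ hji => by rw [horth i j (Ne.symm hji), mul_zero])
      (fun h => absurd (mem_univ i) h)]
    simp [hN]; ring
  have e3 : ∑ k, g k * (∑ i, c i * b i k) = ∑ i, c i * A i := by
    have : ∀ k, g k * (∑ i, c i * b i k) = ∑ i, c i * (g k * b i k) := by
      intro k; rw [Finset.mul_sum]; exact Finset.sum_congr rfl (fun i _ => by ring)
    rw [Finset.sum_congr rfl (fun k _ => this k), Finset.sum_comm]
    exact Finset.sum_congr rfl (fun i _ => by rw [Finset.mul_sum])
  have expand : ∑ k, (g k - ∑ i, c i * b i k)^2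
      = ∑ k, (g k)^2 - 2 * ∑ i, c i * A i + ∑ i, (c i)^2 * N i := by
    have expand0 : ∑ k, (g k - ∑ i, c i * b i k)^2
        = ∑ k, ((g k)^2 - 2*(g k * ∑ i, c i * b i k)
            + (∑ i, c i * b i k) * (∑ j, c j * b j k)) :=
      Finset.sum_congr rfl fun k _ => by ring
    rw [expand0, Finset.sum_add_distrib, Finset.sum_sub_distrib, e2,
      show (∑ k, 2*(g k * ∑ i, c i * b i k)) = 2 * ∑ k, g k * ∑ i, c i * b i k
        from (Finset.mul_sum _ _ _).symm, e3]
  rw [expand]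
  have per_i : ∀ i, (c i)^2 * N i - 2 * (c i * A i)
      = (c i - q i)^2 * N i - (q i)^2 * N i := by
    intro i
    linear_combination (2 * c i) * hqN i
  have : ∑ i, (c i)^2 * N i - 2 * ∑ i, c i * A i
      = ∑ i, (c i - q i)^2 * N i - ∑ i, (q i)^2 * N i := by
    rw [Finset.mul_sum, ← Finset.sum_sub_distrib, ← Finset.sum_sub_distrib]
    exact Finset.sum_congr rfl (fun i _ => per_i i)
  linarith [this]



/-- With `{π_i}` an orthogonal basis of `𝒫^{r−m−1}` for the discrete
inner product `(u,v)_{ω_m²} = Σ_k w_k u(x''_k) v(x''_k)`, the solution `P̂_X` of the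
constrained least-squares problem satisfies
`‖f − P̂_X‖₂² = ‖f − P_{X'}‖₂² − Σ_i q̃_i² ‖π_i ω_m‖₂²`. -/
theorem error_formula_orthogonal_basis
    (m n r : ℕ) (hmr : m < r) (hrn : r ≤ n)
    (x' : Fin (m + 1) → ℝ) (x'' : Fin (n - m) → ℝ)
    (hx'mono : StrictMono x') (hx''mono : StrictMono x'')
    (hx'mem : ∀ i, x' i ∈ Set.Icc (-1 : ℝ) 1)
    (hx''mem : ∀ k, x'' k ∈ Set.Icc (-1 : ℝ) 1)
    (hdisj : ∀ i k, x' i ≠ x'' k)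
    (f : ℝ → ℝ)
    (PX' : Polynomial ℝ) (hPX'deg : PX'.degree ≤ (m : ℕ))
    (hPX'interp : ∀ i, PX'.eval (x' i) = f (x' i))
    (ω : Polynomial ℝ)
    (hω : ω = ∏ i : Fin (m + 1), (Polynomial.X - Polynomial.C (x' i)))
    (w : Fin (n - m) → ℝ) (hw : ∀ k, w k = (ω.eval (x'' k)) ^ 2)
    -- `B` is a basis of `𝒫^{r−m−1}` orthogonal w.r.t. the discrete inner product
    (B : Fin (r - m) → Polynomial ℝ)
    (hBdeg : ∀ i, (B i).degree ≤ (r - m - 1 : ℕ))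
    (hBindep : LinearIndependent ℝ B)
    (hBspan : ∀ Q : Polynomial ℝ, Q.degree ≤ (r - m - 1 : ℕ) →
      ∃ c : Fin (r - m) → ℝ, Q = ∑ i : Fin (r - m), Polynomial.C (c i) * B i)
    (hBorth : ∀ i j, i ≠ j →
      ∑ k : Fin (n - m), w k * (B i).eval (x'' k) * (B j).eval (x'' k) = 0)
    -- the coefficients `q̃_i`
    (qt : Fin (r - m) → ℝ)
    (hqt : ∀ i, qt i =
      (∑ k : Fin (n - m),
          (f (x'' k) - PX'.eval (x'' k)) * (B i).eval (x'' k) * ω.eval (x'' k)) /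
        ∑ k : Fin (n - m), ((B i).eval (x'' k) * ω.eval (x'' k)) ^ 2)
    -- `P̂_X` is the solution of the constrained least-squares problem
    (Phat : Polynomial ℝ)
    (hPhatdeg : Phat.degree ≤ (r : ℕ))
    (hPhatinterp : ∀ i, Phat.eval (x' i) = f (x' i))
    (hPhatmin : ∀ P : Polynomial ℝ, P.degree ≤ (r : ℕ) →
      (∀ i, P.eval (x' i) = f (x' i)) →
      ∑ k : Fin (n - m), (f (x'' k) - Phat.eval (x'' k)) ^ 2 ≤
        ∑ k : Fin (n - m), (f (x'' k) - P.eval (x'' k)) ^ 2) :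
    ∑ k : Fin (n - m), (f (x'' k) - Phat.eval (x'' k)) ^ 2 =
      ∑ k : Fin (n - m), (f (x'' k) - PX'.eval (x'' k)) ^ 2 -
        ∑ i : Fin (r - m),
          (qt i) ^ 2 * ∑ k : Fin (n - m), ((B i).eval (x'' k) * ω.eval (x'' k)) ^ 2 := by
  
  classical
  -- abbreviations
  set g : Fin (n - m) → ℝ := fun k => f (x'' k) - PX'.eval (x'' k) with hg
  set b : Fin (r - m) → Fin (n - m) → ℝ :=
    fun i k => (B i).eval (x'' k) * ω.eval (x'' k) with hb
  have horth : ∀ i j, i ≠ j → ∑ k, b i k * b j k = 0 := by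
    intro i j hij
    rw [← hBorth i j hij]
    refine Finset.sum_congr rfl fun k _ => ?_
    rw [hw k]; simp only [hb]; ring
  have hq : ∀ i, qt i = (∑ k, g k * b i k) / (∑ k, (b i k)^2) := by
    intro i
    rw [hqt i]
    congr 1
    refine Finset.sum_congr rfl fun k _ => ?_
    simp only [hg, hb]; ring
  have key := sum_sq_key g b horth qt hq
  -- facts about ω
  have hωmonic : ω.Monic := by
    rw [hω]; exact Polynomial.monic_prod_of_monic _ _ fun i _ => Polynomial.monic_X_sub_C _
  have hωne : ω ≠ 0 := hωmonic.ne_zero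
  have hωdeg : ω.natDegree = m + 1 := by
    rw [hω, Polynomial.natDegree_prod _ _ (fun i _ => Polynomial.X_sub_C_ne_zero _)]
    simp
  have hωroot : ∀ i, ω.eval (x' i) = 0 := by
    intro i
    rw [hω, Polynomial.eval_prod]
    exact Finset.prod_eq_zero (Finset.mem_univ i) (by simp)
  -- evaluation of candidate polynomials
  have heval : ∀ (c : Fin (r - m) → ℝ) (k : Fin (n - m)),
      f (x'' k) - (PX' + ω * ∑ i, Polynomial.C (c i) * B i).eval (x'' k)
        = g k - ∑ i, c i * b i k := by
    intro c k
    simp only [Polynomial.eval_add, Polynomial.eval_mul, Polynomial.eval_finset_sum,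
      Polynomial.eval_C, hg, hb]
    rw [Finset.mul_sum]
    rw [show (∑ i, ω.eval (x'' k) * (c i * (B i).eval (x'' k)))
        = ∑ i, c i * ((B i).eval (x'' k) * ω.eval (x'' k)) from
      Finset.sum_congr rfl fun i _ => by ring]
    ring
  have hEc : ∀ c : Fin (r - m) → ℝ,
      ∑ k, (f (x'' k) - (PX' + ω * ∑ i, Polynomial.C (c i) * B i).eval (x'' k))^2
        = ∑ k, (g k)^2 - ∑ i, (qt i)^2 * (∑ k, (b i k)^2)
          + ∑ i, (c i - qt i)^2 * (∑ k, (b i k)^2) := by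
    intro c
    rw [Finset.sum_congr rfl fun k _ => by rw [heval c k]]
    exact sum_sq_key g b horth qt hq c
  -- degree bound for candidates
  have hPX'nd : PX'.natDegree ≤ m := Polynomial.natDegree_le_iff_degree_le.mpr hPX'deg
  have hcdeg : ∀ c : Fin (r - m) → ℝ,
      (PX' + ω * ∑ i, Polynomial.C (c i) * B i).degree ≤ (r : ℕ) := by
    intro c
    rw [← Polynomial.natDegree_le_iff_degree_le]
    refine le_trans (Polynomial.natDegree_add_le _ _) (max_le (le_trans hPX'nd hmr.le) ?_)
    refine le_trans (Polynomial.natDegree_mul_le) ?_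
    have h1 : (∑ i, Polynomial.C (c i) * B i).natDegree ≤ r - m - 1 :=
      Polynomial.natDegree_sum_le_of_forall_le _ _ fun i _ =>
        le_trans (Polynomial.natDegree_C_mul_le _ _)
          (Polynomial.natDegree_le_iff_degree_le.mpr (hBdeg i))
    omega
  have hcinterp : ∀ (c : Fin (r - m) → ℝ) i,
      (PX' + ω * ∑ j, Polynomial.C (c j) * B j).eval (x' i) = f (x' i) := by
    intro c i
    simp [hωroot i, hPX'interp i]
  -- upper bound: compare with the candidate with coefficients qt
  have hupper : ∑ k, (f (x'' k) - Phat.eval (x'' k)) ^ 2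
      ≤ ∑ k, (g k)^2 - ∑ i, (qt i)^2 * (∑ k, (b i k)^2) := by
    have := hPhatmin (PX' + ω * ∑ i, Polynomial.C (qt i) * B i) (hcdeg qt) (hcinterp qt)
    rw [hEc qt] at this
    simpa using this
  -- decomposition of Phat
  have hroots : ∀ i, (Phat - PX').eval (x' i) = 0 := by
    intro i; simp [hPhatinterp i, hPX'interp i]
  have hdvd : ω ∣ (Phat - PX') := by
    rw [hω]
    exact Finset.prod_dvd_of_coprime
      ((Polynomial.pairwise_coprime_X_sub_C hx'mono.injective).set_pairwise _)
      (fun i _ => Polynomial.dvd_iff_isRoot.mpr (hroots i))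
  obtain ⟨Q, hQ⟩ := hdvd
  have hPhateq : Phat = PX' + ω * Q := by
    have := hQ; linear_combination hQ
  have hQdeg : Q.degree ≤ ((r - m - 1 : ℕ) : WithBot ℕ) := by
    by_cases hQ0 : Q = 0
    · simp [hQ0]
    · rw [← Polynomial.natDegree_le_iff_degree_le]
      have hD : (Phat - PX').natDegree ≤ r :=
        le_trans (Polynomial.natDegree_sub_le _ _)
          (max_le (Polynomial.natDegree_le_iff_degree_le.mpr hPhatdeg) (le_trans hPX'nd hmr.le))
      rw [hQ, Polynomial.natDegree_mul hωne hQ0, hωdeg] at hD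
      omega
  obtain ⟨c, hc⟩ := hBspan Q hQdeg
  have hlower : ∑ k, (g k)^2 - ∑ i, (qt i)^2 * (∑ k, (b i k)^2)
      ≤ ∑ k, (f (x'' k) - Phat.eval (x'' k)) ^ 2 := by
    have hE : ∑ k, (f (x'' k) - Phat.eval (x'' k)) ^ 2
        = ∑ k, (g k)^2 - ∑ i, (qt i)^2 * (∑ k, (b i k)^2)
          + ∑ i, (c i - qt i)^2 * (∑ k, (b i k)^2) := by
      rw [hPhateq, hc]; exact hEc c
    have hpos : (0:ℝ) ≤ ∑ i, (c i - qt i)^2 * (∑ k, (b i k)^2) :=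
      Finset.sum_nonneg fun i _ => mul_nonneg (sq_nonneg _)
        (Finset.sum_nonneg fun k _ => sq_nonneg _)
    linarith
  have := le_antisymm hupper hlower
  simp only [hg, hb] at this ⊢
  linarith
end

section
/- For every integer n ≥ 8, setting m = ⌊(π/√2)√n⌋, one has −cos(3π/m) > −1 + 7/n; consequently the Chebyshev–Lobatto node x_3^{CL} = −cos(3π/m) is strictly closer to x_{4,n} = −1 + 8/n than to x_{3,n} = −1 + 6/n. -/
/-!
Write `x = 3π/m`. Since `6 ≤ m ≤ π √(n/2)`, we have `x ≤ π/2` and `m² ≤ π² n / 2`.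
Concavity of `sin` on `[0, π/4]` gives `1 - cos x = 2 sin²(x/2) ≥ 4x²/π²` on `[0, π/2]`, so
`1 - cos x ≥ 36/m² ≥ 72/(π² n) > 7/n` because `π² < 72/7`. A point beyond the midpoint
`-1 + 7/n` of `-1 + 6/n` and `-1 + 8/n` is closer to the latter.
-/

open Real

namespace Real

lemma sin_div_mul_le_sin {a y : ℝ} (ha : 0 < a) (haπ : a ≤ π) (hy : 0 ≤ y) (hya : y ≤ a) :
    sin a / a * y ≤ sin y := by
  have hw : 0 ≤ 1 - y / a := by rw [sub_nonneg, div_le_one ha]; exact hya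
  have := strictConcaveOn_sin_Icc.concaveOn.2 (x := 0) (y := a) ⟨le_rfl, pi_pos.le⟩
    ⟨ha.le, haπ⟩ hw (div_nonneg hy ha.le) (by ring)
  simp only [smul_eq_mul, mul_zero, zero_add, sin_zero, div_mul_cancel₀ y ha.ne'] at this
  linarith [div_mul_comm (sin a) a y]

lemma cos_le_one_sub_mul_sq_of_le_pi_div_two {x : ℝ} (hx₀ : 0 ≤ x) (hx : x ≤ π / 2) :
    cos x ≤ 1 - 4 / π ^ 2 * x ^ 2 := by
  have hchord : √2 / π * x ≤ sin (x / 2) := by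
    have := sin_div_mul_le_sin (a := π / 4) (y := x / 2) (by positivity)
      (by linarith [pi_pos]) (by positivity) (by linarith)
    rw [sin_pi_div_four] at this
    convert this using 1
    field_simp
    ring
  have := (pow_le_pow_left₀ (by positivity) hchord 2).trans_eq (sin_sq_eq_half_sub _)
  rw [mul_pow, div_pow, sq_sqrt zero_le_two, show 2 * (x / 2) = x by ring] at this
  linarith [show 4 / π ^ 2 * x ^ 2 = 2 * (2 / π ^ 2 * x ^ 2) by ring]

lemma pi_div_sqrt_two_mul_sqrt (n : ℝ) : π / √2 * √n = √(π ^ 2 * n / 2) := by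
  rw [sqrt_div' _ zero_le_two, sqrt_mul (sq_nonneg π), sqrt_sq pi_pos.le]
  ring

end Real

lemma abs_sub_lt_abs_sub_of_midpoint_lt {a b c : ℝ} (hab : a < b) (hc : (a + b) / 2 < c) :
    |c - b| < |c - a| := by
  rw [abs_of_pos (by linarith : 0 < c - a), abs_sub_lt_iff]
  constructor <;> linarith

/-- For every `n ≥ 8`, with `m = ⌊(π/√2)√n⌋`, one has
`−cos(3π/m) > −1 + 7/n`; consequently the Chebyshev–Lobatto node
`x_3^{CL} = −cos(3π/m)` is strictly closer to `x_{4,n} = −1 + 8/n` than to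
`x_{3,n} = −1 + 6/n`. -/
theorem third_chebyshev_node_closer_to_fourth_equispaced
    (n : ℕ) (hn : 8 ≤ n) (m : ℕ)
    (hm : m = ⌊Real.pi / Real.sqrt 2 * Real.sqrt n⌋₊) :
    -Real.cos (3 * Real.pi / m) > -1 + 7 / (n : ℝ) ∧
      |(-Real.cos (3 * Real.pi / m)) - (-1 + 8 / (n : ℝ))| <
        |(-Real.cos (3 * Real.pi / m)) - (-1 + 6 / (n : ℝ))| := by
  have hn8 : (8 : ℝ) ≤ n := by exact_mod_cast hn
  have hπ2 : π ^ 2 < 72 / 7 := by nlinarith [pi_gt_three, pi_lt_d2]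
  rw [pi_div_sqrt_two_mul_sqrt n] at hm
  have hm6 : (6 : ℝ) ≤ m := by
    rw [hm]
    exact_mod_cast Nat.le_floor <| (le_sqrt (by norm_num) (by positivity)).2 <| by
      nlinarith [pi_gt_three]
  have hm_sq : (m : ℝ) ^ 2 ≤ π ^ 2 * n / 2 := by
    rw [← sq_sqrt (by positivity : 0 ≤ π ^ 2 * n / 2), hm]
    exact pow_le_pow_left₀ (Nat.cast_nonneg _) (Nat.floor_le (sqrt_nonneg _)) 2
  have hcos : cos (3 * π / m) ≤ 1 - 36 / (m : ℝ) ^ 2 := by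
    have := cos_le_one_sub_mul_sq_of_le_pi_div_two (x := 3 * π / m) (by positivity) <| by
      rw [div_le_iff₀ (by linarith)]; nlinarith [pi_pos]
    convert this using 2
    field_simp
    ring
  have h7 : 7 / (n : ℝ) < 36 / (m : ℝ) ^ 2 := by
    rw [div_lt_div_iff₀ (by positivity) (by positivity)]
    nlinarith
  have hmid : -1 + 7 / (n : ℝ) < -cos (3 * π / m) := by linarith
  refine ⟨hmid, abs_sub_lt_abs_sub_of_midpoint_lt ?_ ?_⟩
  · gcongr
    norm_num
  · convert hmid using 1
    ring
end

section
/- There exists an integer N such that for every integer n ≥ N and every mock-Chebyshev subset X'_m of X_n (with m = ⌊(π/√2)√n⌋), writing the complement as X''_{n−m} = {x''_1 < x''_2 < ⋯ < x''_{n−m}}, one has max_{2 ≤ i ≤ n−m} (x''_i − x''_{i−1}) ≤ 4/n; i.e. any two consecutive nodes of X''_{n−m} are at most twice the grid spacing 2h = 4/n apart. -/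
/-!
Rescale `[-1, 1]` so that the equispaced nodes become the integers `0, …, n`. The
Chebyshev–Lobatto nodes become `y j = (1 - cos (π j / m)) n / 2`, and a node of `X_n` nearest to
`y j` lies within `1/2` of it. Because `2 m² ≤ π² n < 2 (m + 1)²`, consecutive `y j` are less
than `1` apart at the two ends (`j = 0` and `j = m - 1`) and more than `2` apart in between
(`2 ≤ j ≤ m - 3`). If consecutive unselected grid points `a < b` had `b ≥ a + 3`, then
`b - 2 = σ i` and `b - 1 = σ i'` with `i < i'`, so `y (i + 1) - y i ≤ 2` and `i` lies at one of
the ends. There the small gaps force `a = 0 = σ 0` or `b = n = σ m`, a contradiction.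
-/

open Real

lemma sin_le_sin_of_mem_Icc {v u : ℝ} (hv : 0 ≤ v) (hu : u ∈ Set.Icc v (π - v)) :
    sin v ≤ sin u := by
  have h := strictConcaveOn_sin_Icc.concaveOn.min_le_of_mem_Icc
    ⟨hv, by linarith [hu.1, hu.2]⟩ ⟨by linarith [hu.1, hu.2], by linarith⟩ hu
  rwa [sin_pi_sub, min_self] at h

lemma two_mul_pi_sq_div_sq_lt_cos_sub_cos {m i : ℕ} (hm : 10 ≤ m) (hi : 2 ≤ i)
    (him : i + 3 ≤ m) :
    2 * π ^ 2 / m ^ 2 < cos (π * i / m) - cos (π * (i + 1) / m) := by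
  have hmR : (10 : ℝ) ≤ m := by exact_mod_cast hm
  have hiR : (2 : ℝ) ≤ i := by exact_mod_cast hi
  have himR : (i : ℝ) + 3 ≤ m := by exact_mod_cast him
  set s := π / (2 * m) with hs
  have hs0 : 0 < s := by positivity
  have hπ : π = 2 * m * s := by rw [hs]; field_simp
  have hs_le : s ≤ 4 / 25 := by
    rw [hs, div_le_iff₀ (by positivity)]; nlinarith [pi_lt_d2]
  have hcos :
      cos (π * i / m) - cos (π * (i + 1) / m) = 2 * (sin ((2 * i + 1) * s) * sin s) := by
    have hsum : (π * i / m + π * (i + 1) / m) / 2 = (2 * i + 1) * s := by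
      rw [hπ]; field_simp; ring
    have hdiff : (π * i / m - π * (i + 1) / m) / 2 = -s := by
      rw [hπ]; field_simp; ring
    rw [cos_sub_cos, hsum, hdiff, sin_neg]
    ring
  have hsin5 : sin (5 * s) ≤ sin ((2 * i + 1) * s) :=
    sin_le_sin_of_mem_Icc (by positivity) ⟨by nlinarith, by nlinarith⟩
  have hsin_nonneg : 0 ≤ sin s := sin_nonneg_of_nonneg_of_le_pi hs0.le (by linarith [pi_gt_three])
  have hprod : 4 * s ^ 2 < sin (5 * s) * sin s := by
    have hpoly : 4 < (5 - 125 * s ^ 2 / 6) * (1 - s ^ 2 / 6) := by nlinarith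
    calc 4 * s ^ 2 < s ^ 2 * ((5 - 125 * s ^ 2 / 6) * (1 - s ^ 2 / 6)) := by
          nlinarith [mul_lt_mul_of_pos_left hpoly (pow_pos hs0 2)]
      _ = (5 * s - (5 * s) ^ 3 / 6) * (s - s ^ 3 / 6) := by ring
      _ ≤ sin (5 * s) * sin s :=
        mul_le_mul (sin_gt_sub_cube (by positivity)).le (sin_gt_sub_cube hs0).le (by nlinarith)
          (sin_nonneg_of_nonneg_of_le_pi (by positivity) (by linarith [pi_gt_three]))
  calc 2 * π ^ 2 / m ^ 2 = 8 * s ^ 2 := by rw [hπ]; field_simp; ring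
    _ < 2 * (sin (5 * s) * sin s) := by linarith
    _ ≤ 2 * (sin ((2 * i + 1) * s) * sin s) := by
      gcongr 2 * ?_
      exact mul_le_mul_of_nonneg_right hsin5 hsin_nonneg
    _ = cos (π * i / m) - cos (π * (i + 1) / m) := hcos.symm

lemma abs_sub_le_half_of_forall_abs_sub_le {x : ℝ} {n p : ℕ} (hx : x ∈ Set.Icc (0 : ℝ) n)
    (h : ∀ k : Fin (n + 1), |x - p| ≤ |x - (k : ℕ)|) : |x - p| ≤ 1 / 2 := by
  have hfloor := Nat.floor_le (a := x + 1 / 2) (by linarith [hx.1])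
  have hlt := Nat.lt_floor_add_one (x + 1 / 2)
  have hk : ⌊x + 1 / 2⌋₊ < n + 1 := by
    have : (⌊x + 1 / 2⌋₊ : ℝ) < n + 1 := by linarith [hx.2]
    exact_mod_cast this
  refine (h ⟨_, hk⟩).trans (abs_le.mpr ⟨?_, ?_⟩) <;> simp only <;> linarith

lemma natCast_le_of_abs_sub_le_half {x y : ℝ} {p q : ℕ} (hp : |x - p| ≤ 1 / 2)
    (hq : |y - q| ≤ 1 / 2) (hxy : x < y) : p ≤ q := by
  rw [abs_le] at hp hq
  have : (p : ℝ) < q + 1 := by linarith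
  exact Nat.lt_add_one_iff.mp (by exact_mod_cast this)

section Selection

variable {n m : ℕ} {y : ℕ → ℝ} {σ : Fin (m + 1) → Fin (n + 1)}

lemma lt_of_apply_eq_apply_add_one (hy : StrictMonoOn y (Set.Iic m))
    (hσ : ∀ j : Fin (m + 1), |y j - (σ j : ℕ)| ≤ 1 / 2) {i i' : Fin (m + 1)}
    (h : (σ i' : ℕ) = σ i + 1) : (i : ℕ) < i' := by
  by_contra! hle
  rcases hle.lt_or_eq with hlt | heq
  · have := natCast_le_of_abs_sub_le_half (hσ i') (hσ i) <|
      hy (Set.mem_Iic.mpr i'.is_le) (Set.mem_Iic.mpr i.is_le) hlt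
    omega
  · rw [Fin.val_injective heq] at h
    omega

theorem le_add_two_of_consecutive_notMem_range (hy : StrictMonoOn y (Set.Iic m))
    (hy0 : y 0 = 0) (hym : y m = n)
    (hfirst : y 1 - y 0 < 1) (hlast : y m - y (m - 1) < 1)
    (hmid : ∀ i, 2 ≤ i → i + 3 ≤ m → 2 < y (i + 1) - y i)
    (hσ : ∀ j : Fin (m + 1), |y j - (σ j : ℕ)| ≤ 1 / 2)
    {a b : Fin (n + 1)} (ha : a ∉ Set.range σ) (hb : b ∉ Set.range σ)
    (hab : ∀ c : Fin (n + 1), c ∉ Set.range σ → ¬((a : ℕ) < c ∧ (c : ℕ) < b)) :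
    (b : ℕ) ≤ a + 2 := by
  by_contra! hba
  have hbn : (b : ℕ) ≤ n := b.is_le
  have hsel (c : ℕ) (hac : (a : ℕ) < c) (hcb : c < b) : ∃ j, (σ j : ℕ) = c := by
    by_contra! hc
    exact hab ⟨c, by omega⟩ (fun ⟨j, hj⟩ => hc j (by rw [hj])) ⟨hac, hcb⟩
  obtain ⟨i, hi⟩ := hsel (b - 2) (by omega) (by omega)
  obtain ⟨i', hi'⟩ := hsel (b - 1) (by omega) (by omega)
  have hii' : (i : ℕ) < i' := lt_of_apply_eq_apply_add_one hy hσ (by omega)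
  have hi'm : (i' : ℕ) ≤ m := i'.is_le
  have hmono : MonotoneOn y (Set.Iic m) := hy.monotoneOn
  have hnear := abs_le.mp (hσ i)
  have hnear' := abs_le.mp (hσ i')
  rw [hi, Nat.cast_sub (by omega)] at hnear
  rw [hi', Nat.cast_sub (by omega)] at hnear'
  have hgap : y (i + 1) - y i ≤ 2 := by
    have := hmono (Set.mem_Iic.mpr (by omega)) (Set.mem_Iic.mpr hi'm) hii'
    push_cast at hnear hnear'
    linarith
  obtain hstart | hend | ⟨h2i, him⟩ :
      (i : ℕ) ≤ 1 ∨ m ≤ i + 2 ∨ (2 ≤ (i : ℕ) ∧ (i : ℕ) + 3 ≤ m) := by omega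
  · have hσ0 : (σ 0 : ℕ) = 0 := by
      have := (abs_le.mp (hσ 0)).1
      simp only [Fin.val_zero, hy0] at this
      have : (σ 0 : ℕ) < 1 := by exact_mod_cast (by linarith : ((σ 0 : ℕ) : ℝ) < 1)
      omega
    have hyi : y i < 1 := by
      have := hmono (Set.mem_Iic.mpr (by omega)) (Set.mem_Iic.mpr (by omega)) hstart
      linarith
    have := natCast_le_of_abs_sub_le_half (hσ i) (q := 1) (by norm_num) hyi
    exact ha ⟨0, Fin.ext (by omega)⟩
  · have hσm : (σ (Fin.last m) : ℕ) = n := by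
      have := (abs_le.mp (hσ (Fin.last m))).2
      simp only [Fin.val_last, hym] at this
      have : n < (σ (Fin.last m) : ℕ) + 1 := by
        exact_mod_cast (by linarith : (n : ℝ) < σ (Fin.last m) + 1)
      have : (σ (Fin.last m) : ℕ) ≤ n := (σ (Fin.last m)).is_le
      omega
    have hyi' : y (m - 1) ≤ y i' :=
      hmono (Set.mem_Iic.mpr (by omega)) (Set.mem_Iic.mpr hi'm) (by omega)
    have : n < (b : ℕ) + 1 := by
      push_cast at hnear'
      exact_mod_cast (by linarith : (n : ℝ) < b + 1)
    exact hb ⟨Fin.last m, Fin.ext (by omega)⟩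
  · linarith [hmid i h2i him]

end Selection

/-- The Chebyshev–Lobatto node `-cos (π j / m)` in the affine coordinate on `[-1, 1]` in which
the equispaced node `-1 + 2 k / n` sits at `k`. -/
noncomputable def scaledLobattoNode (n m j : ℕ) : ℝ := (1 - cos (π * j / m)) * n / 2

section ScaledLobattoNode

variable {n m : ℕ}

lemma scaledLobattoNode_zero : scaledLobattoNode n m 0 = 0 := by
  simp [scaledLobattoNode]

lemma scaledLobattoNode_self (hm : m ≠ 0) : scaledLobattoNode n m m = n := by
  simp [scaledLobattoNode, mul_div_cancel_right₀ π (Nat.cast_ne_zero.mpr hm)]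
  ring

lemma scaledLobattoNode_mem_Icc (j : ℕ) : scaledLobattoNode n m j ∈ Set.Icc (0 : ℝ) n := by
  have h1 := cos_le_one (π * j / m)
  have h2 := neg_one_le_cos (π * j / m)
  constructor <;> unfold scaledLobattoNode <;> nlinarith [n.cast_nonneg (α := ℝ)]

lemma scaledLobattoNode_strictMonoOn (hn : 0 < n) :
    StrictMonoOn (scaledLobattoNode n m) (Set.Iic m) := by
  intro j hj k hk hjk
  have hm : (0 : ℝ) < m := by exact_mod_cast (hjk.trans_le hk).bot_lt
  have hjk' : (j : ℝ) < k := by exact_mod_cast hjk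
  have hkm : (k : ℝ) ≤ m := by exact_mod_cast hk
  have hcos : cos (π * k / m) < cos (π * j / m) := by
    apply strictAntiOn_cos ⟨by positivity, ?_⟩ ⟨by positivity, ?_⟩
    · gcongr
    · rw [div_le_iff₀ hm]; nlinarith [pi_pos]
    · rw [div_le_iff₀ hm]; nlinarith [pi_pos]
  unfold scaledLobattoNode
  have : (0 : ℝ) < n := by exact_mod_cast hn
  nlinarith

lemma neg_cos_sub_grid_eq (hn : n ≠ 0) (j k : ℕ) :
    -cos (π * j / m) - (-1 + 2 * k / n) = 2 / n * (scaledLobattoNode n m j - k) := by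
  unfold scaledLobattoNode
  field_simp
  ring

lemma scaledLobattoNode_one_sub_zero_lt (h : π ^ 2 * n < 4 * m ^ 2) :
    scaledLobattoNode n m 1 - scaledLobattoNode n m 0 < 1 := by
  have hm : (0 : ℝ) < m := by
    by_contra! hm
    nlinarith [sq_nonneg π, n.cast_nonneg (α := ℝ), m.cast_nonneg (α := ℝ)]
  have hcos := one_sub_sq_div_two_le_cos (x := π / m)
  have hn : (0 : ℝ) ≤ n := Nat.cast_nonneg n
  simp only [scaledLobattoNode, Nat.cast_one, mul_one, Nat.cast_zero, mul_zero, zero_div,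
    cos_zero, sub_self, zero_mul, sub_zero]
  calc (1 - cos (π / m)) * n / 2 ≤ (π / m) ^ 2 / 2 * n / 2 := by gcongr; linarith
    _ = π ^ 2 * n / (4 * m ^ 2) := by field_simp; ring
    _ < 1 := by rw [div_lt_one (by positivity)]; exact h

lemma scaledLobattoNode_self_sub_pred (hm : m ≠ 0) :
    scaledLobattoNode n m m - scaledLobattoNode n m (m - 1) =
      scaledLobattoNode n m 1 - scaledLobattoNode n m 0 := by
  have hpred : π * ((m - 1 : ℕ) : ℝ) / m = π - π / m := by
    rw [Nat.cast_pred (Nat.pos_of_ne_zero hm)]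
    field_simp
  rw [scaledLobattoNode_self hm, scaledLobattoNode_zero]
  simp only [scaledLobattoNode, hpred, cos_pi_sub, Nat.cast_one, mul_one]
  ring

lemma two_lt_scaledLobattoNode_succ_sub {i : ℕ} (hm : 10 ≤ m) (hmn : 2 * m ^ 2 ≤ π ^ 2 * n)
    (hi : 2 ≤ i) (him : i + 3 ≤ m) :
    2 < scaledLobattoNode n m (i + 1) - scaledLobattoNode n m i := by
  have hgap := two_mul_pi_sq_div_sq_lt_cos_sub_cos hm hi him
  have hm0 : (0 : ℝ) < m := by positivity
  have hn : (0 : ℝ) < n := by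
    by_contra! hn
    nlinarith [sq_nonneg π, n.cast_nonneg (α := ℝ)]
  have hscale : 2 ≤ 2 * π ^ 2 / m ^ 2 * n / 2 := by
    rw [div_mul_eq_mul_div, div_div, le_div_iff₀ (by positivity)]
    nlinarith
  calc (2 : ℝ) ≤ 2 * π ^ 2 / m ^ 2 * n / 2 := hscale
    _ < (cos (π * i / m) - cos (π * (i + 1) / m)) * n / 2 := by gcongr
    _ = scaledLobattoNode n m (i + 1) - scaledLobattoNode n m i := by
      simp only [scaledLobattoNode, Nat.cast_add, Nat.cast_one]
      ring

end ScaledLobattoNode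

lemma two_mul_sq_le_and_lt_of_eq_floor {n m : ℕ} (hm : m = ⌊π / √2 * √n⌋₊) :
    2 * (m : ℝ) ^ 2 ≤ π ^ 2 * n ∧ π ^ 2 * n < 2 * ((m : ℝ) + 1) ^ 2 := by
  set t := π / √2 * √n with ht
  have ht0 : 0 ≤ t := by positivity
  have ht2 : t ^ 2 = π ^ 2 * n / 2 := by
    rw [ht, mul_pow, div_pow, sq_sqrt zero_le_two, sq_sqrt n.cast_nonneg]
    ring
  have hle : (m : ℝ) ^ 2 ≤ t ^ 2 := pow_le_pow_left₀ m.cast_nonneg (hm ▸ Nat.floor_le ht0) 2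
  have hlt : t ^ 2 < ((m : ℝ) + 1) ^ 2 :=
    pow_lt_pow_left₀ (hm ▸ Nat.lt_floor_add_one t) ht0 two_ne_zero
  constructor <;> linarith

/-- There exists `N` such that for every `n ≥ N` and every
mock-Chebyshev subset `X'_m` of `X_n` (with `m = ⌊(π/√2)√n⌋`, the subset being
chosen by an injective selection `σ` picking, for each `j`, a node of `X_n` at
minimal distance from `x_j^{CL} = −cos(πj/m)`), any two consecutive nodes of the
complement `X''_{n−m} = X_n ∖ X'_m` are at most `4/n` apart. -/
theorem complement_consecutive_gap_le
    : ∃ N : ℕ, ∀ n : ℕ, N ≤ n →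
      ∀ m : ℕ, m = ⌊Real.pi / Real.sqrt 2 * Real.sqrt n⌋₊ →
        ∀ σ : Fin (m + 1) → Fin (n + 1), Function.Injective σ →
          (∀ j : Fin (m + 1), ∀ k : Fin (n + 1),
            |(-Real.cos (Real.pi * j / m)) - (-1 + 2 * ((σ j : ℕ) : ℝ) / n)| ≤
              |(-Real.cos (Real.pi * j / m)) - (-1 + 2 * ((k : ℕ) : ℝ) / n)|) →
          -- if `a` and `b` are consecutive nodes of the complement, then
          -- `x_{b,n} − x_{a,n} ≤ 4/n`
          ∀ a b : Fin (n + 1), a ∉ Set.range σ → b ∉ Set.range σ →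
            (a : ℕ) < (b : ℕ) →
            (∀ c : Fin (n + 1), c ∉ Set.range σ →
              ¬((a : ℕ) < (c : ℕ) ∧ (c : ℕ) < (b : ℕ))) →
            (-1 + 2 * ((b : ℕ) : ℝ) / n) - (-1 + 2 * ((a : ℕ) : ℝ) / n) ≤ 4 / n := by
  refine ⟨25, fun n hn m hm σ _ hmin a b ha hb _ hab => ?_⟩
  obtain ⟨hmn, hnm⟩ := two_mul_sq_le_and_lt_of_eq_floor hm
  have hn0 : n ≠ 0 := by omega
  have hm10 : 10 ≤ m := by
    by_contra! h
    have : (m : ℝ) ≤ 9 := by exact_mod_cast (by omega : m ≤ 9)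
    have : (25 : ℝ) ≤ n := by exact_mod_cast hn
    nlinarith [pi_gt_three, m.cast_nonneg (α := ℝ)]
  have hfirst : scaledLobattoNode n m 1 - scaledLobattoNode n m 0 < 1 := by
    have : (10 : ℝ) ≤ m := by exact_mod_cast hm10
    exact scaledLobattoNode_one_sub_zero_lt (by nlinarith)
  have hnear (j : Fin (m + 1)) : |scaledLobattoNode n m j - (σ j : ℕ)| ≤ 1 / 2 :=
    abs_sub_le_half_of_forall_abs_sub_le (scaledLobattoNode_mem_Icc j) fun k => by
      have := hmin j k
      rwa [neg_cos_sub_grid_eq hn0, neg_cos_sub_grid_eq hn0, abs_mul, abs_mul,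
        mul_le_mul_iff_right₀ (by positivity)] at this
  have hba : (b : ℕ) ≤ a + 2 :=
    le_add_two_of_consecutive_notMem_range (scaledLobattoNode_strictMonoOn (by omega))
      scaledLobattoNode_zero (scaledLobattoNode_self (by omega)) hfirst
      ((scaledLobattoNode_self_sub_pred (by omega)).trans_lt hfirst)
      (fun _ => two_lt_scaledLobattoNode_succ_sub hm10 hmn) hnear ha hb hab
  have hba' : ((b : ℕ) : ℝ) ≤ a + 2 := by exact_mod_cast hba
  rw [show (-1 + 2 * ((b : ℕ) : ℝ) / n) - (-1 + 2 * ((a : ℕ) : ℝ) / n)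
    = 2 * (b - a : ℝ) / n by ring]
  gcongr
  linarith
end

section
/- For every continuous φ : [−1,1] → ℝ with ‖φ‖_∞ = 1 one has ‖L_{p,q} φ‖_∞ ≤ ‖I_p‖ · (1 + √q · sup_{‖ψ‖_∞ = 1} E_p(ψ)); equivalently, the operator norm satisfies ‖L_{p,q}‖ ≤ ‖I_p‖ (1 + √q · sup_{‖ψ‖_∞=1} E_p(ψ)). -/
/-- The uniform norm on `[−1, 1]`. -/
noncomputable def unifNorm (φ : ℝ → ℝ) : ℝ :=
  sSup ((fun t => |φ t|) '' Set.Icc (-1 : ℝ) 1)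

/-- `E_p(φ) = inf_{Q ∈ 𝒫^p} ‖φ − Q‖_∞`, the best uniform approximation error by
polynomials of degree `≤ p`. -/
noncomputable def Ep (p : ℕ) (φ : ℝ → ℝ) : ℝ :=
  sInf {e : ℝ | ∃ Q : Polynomial ℝ, Q.degree ≤ (p : ℕ) ∧
    e = unifNorm fun t => φ t - Q.eval t}

/-- The operator norm, induced by the uniform norm on `[−1, 1]`, of an operator
sending continuous functions to polynomials. -/
noncomputable def opNorm (T : (ℝ → ℝ) → Polynomial ℝ) : ℝ :=
  sSup {a : ℝ | ∃ φ : ℝ → ℝ, ContinuousOn φ (Set.Icc (-1 : ℝ) 1) ∧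
    unifNorm φ = 1 ∧ a = unifNorm fun t => (T φ).eval t}

/-- `sup_{‖ψ‖_∞ = 1} E_p(ψ)` over continuous `ψ`. -/
noncomputable def supEp (p : ℕ) : ℝ :=
  sSup {a : ℝ | ∃ ψ : ℝ → ℝ, ContinuousOn ψ (Set.Icc (-1 : ℝ) 1) ∧
    unifNorm ψ = 1 ∧ a = Ep p ψ}

lemma unifNorm_nonneg (f : ℝ → ℝ) : 0 ≤ unifNorm f :=
  Real.sSup_nonneg (by rintro x ⟨t, _, rfl⟩; positivity)

lemma unifNorm_le {f : ℝ → ℝ} {M : ℝ} (hM : 0 ≤ M)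
    (h : ∀ t ∈ Set.Icc (-1:ℝ) 1, |f t| ≤ M) : unifNorm f ≤ M :=
  Real.sSup_le (by rintro x ⟨t, ht, rfl⟩; exact h t ht) hM

lemma le_unifNorm {f : ℝ → ℝ} (hf : ContinuousOn f (Set.Icc (-1:ℝ) 1))
    {t : ℝ} (ht : t ∈ Set.Icc (-1:ℝ) 1) : |f t| ≤ unifNorm f := by
  apply le_csSup
  · exact (isCompact_Icc.image_of_continuousOn hf.abs).bddAbove
  · exact ⟨t, ht, rfl⟩

lemma exists_unifNorm_eq {f : ℝ → ℝ} (hf : ContinuousOn f (Set.Icc (-1:ℝ) 1)) :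
    ∃ t ∈ Set.Icc (-1:ℝ) 1, unifNorm f = |f t| := by
  obtain ⟨t, ht, hmax⟩ := isCompact_Icc.exists_isMaxOn
    (by norm_num : (Set.Icc (-1:ℝ) 1).Nonempty) hf.abs
  exact ⟨t, ht, le_antisymm (unifNorm_le (abs_nonneg _) fun s hs => hmax hs)
    (le_unifNorm hf ht)⟩

lemma unifNorm_zero : unifNorm (fun _ => (0:ℝ)) = 0 := by
  have : (fun t : ℝ => |(0:ℝ)|) '' Set.Icc (-1:ℝ) 1 = {0} := by
    simp [Set.Nonempty.image_const (by norm_num : (Set.Icc (-1:ℝ) 1).Nonempty)]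
  simp only [unifNorm, this, csSup_singleton]

/-- Reichel: for every continuous `φ` with `‖φ‖_∞ = 1`,
`‖L_{p,q} φ‖_∞ ≤ ‖I_p‖ (1 + √q · sup_{‖ψ‖_∞=1} E_p(ψ))`, where `I_p` interpolates
at a `(p+1)`-point subset of the least-squares nodes. -/
theorem least_squares_opNorm_bound
    (p q : ℕ) (hpq : p + 1 ≤ q)
    (z : Fin q → ℝ) (hzinj : Function.Injective z)
    (hzmem : ∀ k, z k ∈ Set.Icc (-1 : ℝ) 1)
    -- `L` is the discrete least-squares projection onto `𝒫^p` at the nodes `z`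
    (L : (ℝ → ℝ) → Polynomial ℝ)
    (hL : ∀ φ : ℝ → ℝ, ContinuousOn φ (Set.Icc (-1 : ℝ) 1) →
      (L φ).degree ≤ (p : ℕ) ∧ ∀ Q : Polynomial ℝ, Q.degree ≤ (p : ℕ) →
        ∑ k : Fin q, (φ (z k) - (L φ).eval (z k)) ^ 2 ≤
          ∑ k : Fin q, (φ (z k) - Q.eval (z k)) ^ 2)
    -- `I` is the Lagrange interpolation operator at the subset `z ∘ ι` of the nodes
    (ι : Fin (p + 1) → Fin q) (hι : Function.Injective ι)
    (I : (ℝ → ℝ) → Polynomial ℝ)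
    (hI : ∀ φ : ℝ → ℝ, ContinuousOn φ (Set.Icc (-1 : ℝ) 1) →
      (I φ).degree ≤ (p : ℕ) ∧ ∀ j : Fin (p + 1), (I φ).eval (z (ι j)) = φ (z (ι j)))
    (φ : ℝ → ℝ) (hφ : ContinuousOn φ (Set.Icc (-1 : ℝ) 1))
    (hφ1 : unifNorm φ = 1) :
    unifNorm (fun t => (L φ).eval t) ≤
      opNorm I * (1 + Real.sqrt q * supEp p) := by
  classical
  set v : Fin (p+1) → ℝ := fun j => z (ι j) with hv
  have hvinj : Set.InjOn v (Finset.univ : Finset (Fin (p+1))) :=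
    fun a _ b _ h => hι (hzinj h)
  have hvmem : ∀ j, v j ∈ Set.Icc (-1:ℝ) 1 := fun j => hzmem (ι j)
  have hdeglt : ∀ P : Polynomial ℝ, P.degree ≤ (p:ℕ) →
      P.degree < ((Finset.univ : Finset (Fin (p+1))).card : ℕ) := by
    intro P hP
    refine lt_of_le_of_lt hP ?_
    rw [Finset.card_univ, Fintype.card_fin]
    exact_mod_cast Nat.lt_succ_self p
  have huniq : ∀ P Q : Polynomial ℝ, P.degree ≤ (p:ℕ) → Q.degree ≤ (p:ℕ) →
      (∀ j, P.eval (v j) = Q.eval (v j)) → P = Q := fun P Q hP hQ h =>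
    Polynomial.eq_of_degrees_lt_of_eval_index_eq _ hvinj (hdeglt P hP) (hdeglt Q hQ)
      (fun i _ => h i)
  -- boundedness of the opNorm set
  have hbdd : BddAbove {a : ℝ | ∃ ψ : ℝ → ℝ, ContinuousOn ψ (Set.Icc (-1 : ℝ) 1) ∧
      unifNorm ψ = 1 ∧ a = unifNorm fun t => (I ψ).eval t} := by
    refine ⟨∑ j : Fin (p+1), unifNorm (fun t => (Lagrange.basis Finset.univ v j).eval t), ?_⟩
    rintro a ⟨ψ, hψ, hψ1, rfl⟩
    have hIrep : I ψ = Lagrange.interpolate Finset.univ v (fun j => ψ (v j)) := by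
      obtain ⟨hd, hval⟩ := hI ψ hψ
      exact Lagrange.eq_interpolate_of_eval_eq _ hvinj (hdeglt _ hd) (fun i _ => hval i)
    refine unifNorm_le (Finset.sum_nonneg fun j _ => unifNorm_nonneg _) ?_
    intro t ht
    have heval : (I ψ).eval t
        = ∑ j : Fin (p+1), ψ (v j) * (Lagrange.basis Finset.univ v j).eval t := by
      rw [hIrep, Lagrange.interpolate_apply, Polynomial.eval_finset_sum]
      simp [Polynomial.eval_mul]
    rw [heval]
    refine (Finset.abs_sum_le_sum_abs _ _).trans (Finset.sum_le_sum ?_)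
    intro j _
    rw [abs_mul]
    have h1 : |ψ (v j)| ≤ 1 := hψ1 ▸ le_unifNorm hψ (hvmem j)
    have h2 : |(Lagrange.basis Finset.univ v j).eval t| ≤
        unifNorm (fun t => (Lagrange.basis Finset.univ v j).eval t) :=
      le_unifNorm (Polynomial.continuous _).continuousOn ht
    calc |ψ (v j)| * |(Lagrange.basis Finset.univ v j).eval t|
        ≤ 1 * unifNorm (fun t => (Lagrange.basis Finset.univ v j).eval t) :=
          mul_le_mul h1 h2 (abs_nonneg _) zero_le_one
      _ = _ := one_mul _
  have hOnn : 0 ≤ opNorm I :=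
    Real.sSup_nonneg (by rintro a ⟨ψ, _, _, rfl⟩; exact unifNorm_nonneg _)
  -- key lemma
  have key : ∀ P : Polynomial ℝ, P.degree ≤ (p:ℕ) → ∀ M : ℝ, 0 < M →
      (∀ j, |P.eval (v j)| ≤ M) →
      unifNorm (fun t => P.eval t) ≤ opNorm I * M := by
    intro P hPdeg M hM hPM
    by_cases hP0 : ∀ j, P.eval (v j) = 0
    · have hP : P = 0 := huniq P 0 hPdeg (by simp) (by simp [hP0])
      rw [hP]
      simp only [Polynomial.eval_zero]
      rw [unifNorm_zero]
      exact mul_nonneg hOnn hM.le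
    · push_neg at hP0
      obtain ⟨j₀, hj₀⟩ := hP0
      set g : Polynomial ℝ := Lagrange.interpolate Finset.univ v (fun j => P.eval (v j) / M)
        with hg
      set ψ : ℝ → ℝ := fun t => max (-1) (min 1 (g.eval t)) with hψdef
      have hψcont : Continuous ψ :=
        continuous_const.max (continuous_const.min (Polynomial.continuous g))
      have hψnode : ∀ j, ψ (v j) = P.eval (v j) / M := by
        intro j
        have hgj : g.eval (v j) = P.eval (v j) / M :=
          Lagrange.eval_interpolate_at_node _ hvinj (Finset.mem_univ j)
        have habs : |P.eval (v j) / M| ≤ 1 := by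
          rw [abs_div, abs_of_pos hM]
          exact div_le_one_of_le₀ (hPM j) hM.le
        have h := abs_le.mp habs
        show max (-1) (min 1 (g.eval (v j))) = P.eval (v j) / M
        rw [hgj, min_eq_right h.2, max_eq_right h.1]
      have hψle : ∀ t, |ψ t| ≤ 1 := by
        intro t
        rw [abs_le]
        exact ⟨le_max_left _ _, max_le (by norm_num) (min_le_left _ _)⟩
      set c : ℝ := unifNorm ψ with hc
      have hcle : c ≤ 1 := unifNorm_le zero_le_one fun t _ => hψle t
      have hcpos : 0 < c := by
        have h1 : |ψ (v j₀)| ≤ c := le_unifNorm hψcont.continuousOn (hvmem j₀)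
        have h2 : 0 < |ψ (v j₀)| := by
          rw [hψnode j₀]
          exact abs_pos.mpr (div_ne_zero hj₀ hM.ne')
        linarith
      set ψ' : ℝ → ℝ := fun t => ψ t / c with hψ'
      have hψ'cont : ContinuousOn ψ' (Set.Icc (-1:ℝ) 1) :=
        (hψcont.div_const c).continuousOn
      have hψ'norm : unifNorm ψ' = 1 := by
        obtain ⟨t₀, ht₀, hmax⟩ := exists_unifNorm_eq hψcont.continuousOn
        refine le_antisymm (unifNorm_le zero_le_one ?_) ?_
        · intro t ht
          show |ψ t / c| ≤ 1
          rw [abs_div, abs_of_pos hcpos, div_le_one hcpos]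
          exact le_unifNorm hψcont.continuousOn ht
        · have h1 : |ψ' t₀| = 1 := by
            show |ψ t₀ / c| = 1
            rw [abs_div, abs_of_pos hcpos, ← hmax, ← hc, div_self hcpos.ne']
          calc (1:ℝ) = |ψ' t₀| := h1.symm
            _ ≤ unifNorm ψ' := le_unifNorm hψ'cont ht₀
      obtain ⟨hI'deg, hI'val⟩ := hI ψ' hψ'cont
      have hPrep : P = (M * c) • I ψ' := by
        refine huniq P _ hPdeg
          (le_trans (Polynomial.degree_smul_le _ _) hI'deg) ?_
        intro j
        rw [Polynomial.eval_smul, hI'val j]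
        show P.eval (v j) = (M * c) • (ψ (v j) / c)
        rw [hψnode j, smul_eq_mul]
        field_simp
      have hNle : unifNorm (fun t => (I ψ').eval t) ≤ opNorm I := by
        rw [opNorm]
        exact le_csSup hbdd ⟨ψ', hψ'cont, hψ'norm, rfl⟩
      have hNnn : 0 ≤ unifNorm (fun t => (I ψ').eval t) := unifNorm_nonneg _
      refine unifNorm_le (mul_nonneg hOnn hM.le) ?_
      intro t ht
      have h2 : |(I ψ').eval t| ≤ unifNorm (fun t => (I ψ').eval t) :=
        le_unifNorm (Polynomial.continuous _).continuousOn ht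
      have h1 : |P.eval t| = (M * c) * |(I ψ').eval t| := by
        rw [hPrep, Polynomial.eval_smul, smul_eq_mul, abs_mul,
          abs_of_pos (mul_pos hM hcpos)]
      rw [h1]
      have s1 : M * c * |Polynomial.eval t (I ψ')| ≤ M * c * unifNorm (fun t => (I ψ').eval t) :=
        mul_le_mul_of_nonneg_left h2 (by positivity)
      have s2 : M * c * unifNorm (fun t => (I ψ').eval t) ≤ M * unifNorm (fun t => (I ψ').eval t) := by
        have := mul_le_mul_of_nonneg_right (mul_le_mul_of_nonneg_left hcle hM.le) hNnn
        simpa using this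
      have s3 : M * unifNorm (fun t => (I ψ').eval t) ≤ M * opNorm I :=
        mul_le_mul_of_nonneg_left hNle hM.le
      have s4 : M * opNorm I = opNorm I * M := mul_comm _ _
      linarith
  -- Ep facts
  have hSlb : BddBelow {e : ℝ | ∃ Q : Polynomial ℝ, Q.degree ≤ (p:ℕ) ∧
      e = unifNorm fun t => φ t - Q.eval t} :=
    ⟨0, by rintro e ⟨Q, _, rfl⟩; exact unifNorm_nonneg _⟩
  have hS_ne : ({e : ℝ | ∃ Q : Polynomial ℝ, Q.degree ≤ (p:ℕ) ∧
      e = unifNorm fun t => φ t - Q.eval t}).Nonempty :=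
    ⟨unifNorm φ, 0, by simp, by simp⟩
  have hEpnn : 0 ≤ Ep p φ :=
    Real.sInf_nonneg (by rintro e ⟨Q, _, rfl⟩; exact unifNorm_nonneg _)
  have hEple : Ep p φ ≤ supEp p := by
    rw [supEp]
    refine le_csSup ⟨1, ?_⟩ ⟨φ, hφ, hφ1, rfl⟩
    rintro a ⟨ψ, hψ, hψ1, rfl⟩
    rw [Ep]
    refine csInf_le ⟨0, by rintro e ⟨Q, _, rfl⟩; exact unifNorm_nonneg _⟩ ?_
    exact ⟨0, by simp, by simp [hψ1]⟩
  have hsupnn : 0 ≤ supEp p := le_trans hEpnn hEple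
  -- main estimate for every ε > 0
  have main : ∀ ε : ℝ, 0 < ε →
      unifNorm (fun t => (L φ).eval t) ≤
        opNorm I * (1 + Real.sqrt q * (supEp p + ε)) := by
    intro ε hε
    have hlt : sInf {e : ℝ | ∃ Q : Polynomial ℝ, Q.degree ≤ (p:ℕ) ∧
        e = unifNorm fun t => φ t - Q.eval t} < Ep p φ + ε := by
      rw [Ep]; linarith [hε]
    obtain ⟨e, ⟨Q, hQdeg, hee⟩, helt⟩ := exists_lt_of_csInf_lt hS_ne hlt
    subst hee
    set e : ℝ := unifNorm fun t => φ t - Q.eval t with he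
    have he_nn : 0 ≤ e := unifNorm_nonneg _
    have hres : ∀ k : Fin q, (φ (z k) - (L φ).eval (z k))^2 ≤ q * e^2 := by
      intro k
      have hsum := (hL φ hφ).2 Q hQdeg
      have hterm : ∀ m : Fin q, (φ (z m) - Q.eval (z m))^2 ≤ e^2 := by
        intro m
        have h := abs_le.mp
          (le_unifNorm (hφ.sub (Polynomial.continuous Q).continuousOn) (hzmem m))
        exact sq_le_sq' h.1 h.2
      have h2 : ∑ m : Fin q, (φ (z m) - Q.eval (z m))^2 ≤ ∑ _m : Fin q, e^2 :=
        Finset.sum_le_sum fun m _ => hterm m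
      have h3 : ∑ _m : Fin q, (e:ℝ)^2 = q * e^2 := by
        simp [Finset.sum_const, Finset.card_univ, nsmul_eq_mul]
      have h4 : (φ (z k) - (L φ).eval (z k))^2 ≤
          ∑ m : Fin q, (φ (z m) - (L φ).eval (z m))^2 :=
        Finset.single_le_sum (f := fun m => (φ (z m) - (L φ).eval (z m))^2)
          (fun m _ => sq_nonneg _) (Finset.mem_univ k)
      linarith
    have hnode : ∀ j, |(L φ).eval (v j)| ≤ 1 + Real.sqrt q * e := by
      intro j
      have h1 : |φ (v j) - (L φ).eval (v j)| ≤ Real.sqrt q * e := by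
        calc |φ (v j) - (L φ).eval (v j)|
            = Real.sqrt ((φ (v j) - (L φ).eval (v j))^2) :=
              (Real.sqrt_sq_eq_abs _).symm
          _ ≤ Real.sqrt (q * e^2) := Real.sqrt_le_sqrt (hres (ι j))
          _ = Real.sqrt q * e := by
              rw [Real.sqrt_mul (Nat.cast_nonneg q), Real.sqrt_sq he_nn]
      have h5 : |φ (v j)| ≤ 1 := hφ1 ▸ le_unifNorm hφ (hvmem j)
      have h6 : (L φ).eval (v j) = φ (v j) - (φ (v j) - (L φ).eval (v j)) := by ring
      calc |(L φ).eval (v j)|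
          = |φ (v j) - (φ (v j) - (L φ).eval (v j))| := by rw [← h6]
        _ ≤ |φ (v j)| + |φ (v j) - (L φ).eval (v j)| := abs_sub _ _
        _ ≤ 1 + Real.sqrt q * e := add_le_add h5 h1
    have hM : 0 < 1 + Real.sqrt q * e := by positivity
    refine (key (L φ) (hL φ hφ).1 _ hM hnode).trans ?_
    have hee' : e ≤ supEp p + ε := le_trans helt.le (by linarith)
    have hsq : 0 ≤ Real.sqrt q := Real.sqrt_nonneg _
    exact mul_le_mul_of_nonneg_left
      (by linarith [mul_le_mul_of_nonneg_left hee' hsq]) hOnn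
  refine le_of_forall_pos_le_add ?_
  intro ε hε
  set B : ℝ := opNorm I * Real.sqrt q with hB
  have hB0 : 0 ≤ B := mul_nonneg hOnn (Real.sqrt_nonneg _)
  have h := main (ε / (B + 1)) (by positivity)
  have heq : opNorm I * (1 + Real.sqrt q * (supEp p + ε/(B+1)))
      = opNorm I * (1 + Real.sqrt q * supEp p) + B * (ε/(B+1)) := by
    rw [hB]; ring
  have hBε : B * (ε/(B+1)) ≤ ε := by
    rw [mul_div_assoc', div_le_iff₀ (by linarith : (0:ℝ) < B + 1)]
    nlinarith
  rw [heq] at h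
  linarith
end

section
/- The constrained mock-Chebyshev least-squares operator reproduces polynomials of degree at most m + p: if f is the restriction to [−1,1] of a real polynomial of degree at most m + p, where p = r − m − 1, then the unique solution P̂_X of min_{P ∈ 𝒫^{r*}} ‖f − P‖₂² equals f. -/
/-- the constrained mock-Chebyshev least-squares operator
reproduces polynomials of degree at most `m + p` with `p = r − m − 1`: if `f` is
(the restriction to `[−1,1]` of) a polynomial `g` of degree `≤ m + p`, then any
solution `P̂_X` of `min_{P ∈ 𝒫^{r*}} ‖f − P‖₂²` equals `g`. -/
theorem constrained_ls_reproduces_polynomials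
    (m n r : ℕ) (hmr : m < r) (hrn : r ≤ n)
    (x' : Fin (m + 1) → ℝ) (x'' : Fin (n - m) → ℝ)
    (hx'mono : StrictMono x') (hx''mono : StrictMono x'')
    (hx'mem : ∀ i, x' i ∈ Set.Icc (-1 : ℝ) 1)
    (hx''mem : ∀ k, x'' k ∈ Set.Icc (-1 : ℝ) 1)
    (hdisj : ∀ i k, x' i ≠ x'' k)
    (f : ℝ → ℝ)
    -- `f` is the restriction of a polynomial `g` of degree at most `m + p`,
    -- where `p = r − m − 1`
    (g : Polynomial ℝ) (hgdeg : g.degree ≤ (m + (r - m - 1) : ℕ))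
    (hfg : ∀ t ∈ Set.Icc (-1 : ℝ) 1, f t = g.eval t)
    -- `P̂_X` is the solution of the constrained least-squares problem
    (Phat : Polynomial ℝ)
    (hPhatdeg : Phat.degree ≤ (r : ℕ))
    (hPhatinterp : ∀ i, Phat.eval (x' i) = f (x' i))
    (hPhatmin : ∀ P : Polynomial ℝ, P.degree ≤ (r : ℕ) →
      (∀ i, P.eval (x' i) = f (x' i)) →
      ∑ k : Fin (n - m), (f (x'' k) - Phat.eval (x'' k)) ^ 2 ≤
        ∑ k : Fin (n - m), (f (x'' k) - P.eval (x'' k)) ^ 2) :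
    Phat = g := by
  have hgr : g.degree ≤ (r : ℕ) := by
    refine hgdeg.trans ?_
    have h : (m + (r - m - 1) : ℕ) ≤ r := by omega
    exact_mod_cast h
  have hgf' : ∀ i, g.eval (x' i) = f (x' i) := fun i => (hfg _ (hx'mem i)).symm
  have hgf'' : ∀ k, f (x'' k) = g.eval (x'' k) := fun k => hfg _ (hx''mem k)
  have hmin := hPhatmin g hgr hgf'
  have hrhs : ∑ k : Fin (n - m), (f (x'' k) - g.eval (x'' k)) ^ 2 = 0 := by
    apply Finset.sum_eq_zero
    intro k _
    rw [hgf'' k]; ring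
  rw [hrhs] at hmin
  have hsum0 : ∑ k : Fin (n - m), (f (x'' k) - Phat.eval (x'' k)) ^ 2 = 0 :=
    le_antisymm hmin (Finset.sum_nonneg fun k _ => sq_nonneg _)
  have heval'' : ∀ k, Phat.eval (x'' k) = g.eval (x'' k) := by
    intro k
    have := (Finset.sum_eq_zero_iff_of_nonneg
      (fun k _ => sq_nonneg (f (x'' k) - Phat.eval (x'' k)))).mp hsum0 k (Finset.mem_univ k)
    have h0 : f (x'' k) - Phat.eval (x'' k) = 0 := by
      exact pow_eq_zero_iff (by norm_num) |>.mp this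
    have := hgf'' k
    linarith
  -- combine nodes
  set q := Phat - g with hq
  have hqdeg : q.natDegree ≤ r := by
    apply Polynomial.natDegree_le_iff_degree_le.mpr
    exact (Polynomial.degree_sub_le _ _).trans (max_le hPhatdeg hgr)
  have hF : Function.Injective (Sum.elim x' x'') := by
    rintro (a | a) (b | b) h <;> simp only [Sum.elim_inl, Sum.elim_inr] at h
    · exact congrArg Sum.inl (hx'mono.injective h)
    · exact absurd h (hdisj a b)
    · exact absurd h.symm (hdisj b a)
    · exact congrArg Sum.inr (hx''mono.injective h)
  have hq0 : q = 0 := by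
    apply Polynomial.eq_zero_of_natDegree_lt_card_of_eval_eq_zero q hF
    · rintro (i | k)
      · simp [hq, Polynomial.eval_sub, hPhatinterp i, hgf' i]
      · simp [hq, Polynomial.eval_sub, heval'' k]
    · have : Fintype.card (Fin (m + 1) ⊕ Fin (n - m)) = n + 1 := by
        simp [Fintype.card_sum]; omega
      omega
  have := sub_eq_zero.mp hq0
  exact this
end
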